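/- Let n, m be positive integers and β > 0, let Γ, Σ ∈ ℝ^{(n+m)×(n+m)} be constant matrices and F : ℝⁿ → ℝⁿ continuous, and let L be the GLE generator. Let K : ℝⁿ×ℝⁿ×ℝᵐ → [1,∞) be twice continuously differentiable and suppose there exist constants c > 0, c′ ∈ ℝ, c″ ≥ 0 such that for all x = (q,p,s): (L K)(x) ≤ −c‖x‖² + c′ and ‖∇_z K(x)‖ ≤ c″(1 + ‖x‖), where ∇_z denotes the gradient in the variables z = (p,s). Then for every sufficiently small θ > 0 there exists b ∈ ℝ such that the function K̂_θ = exp((θ/2)·K) satisfies (L K̂_θ)(x) ≤ −K̂_θ(x) + b for all x ∈ ℝⁿ×ℝⁿ×ℝᵐ. -/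

import Mathlib

open Matrix

/-- The coordinate direction in the `q`-variable. -/
noncomputable def eQ (n m : ℕ) (i : Fin n) : (Fin n → ℝ) × (Fin n → ℝ) × (Fin m → ℝ) :=
  (Pi.single i 1, 0, 0)

/-- The coordinate direction in the `p`-variable. -/
noncomputable def eP (n m : ℕ) (i : Fin n) : (Fin n → ℝ) × (Fin n → ℝ) × (Fin m → ℝ) :=
  (0, Pi.single i 1, 0)

/-- The coordinate direction in the `s`-variable. -/
noncomputable def eS (n m : ℕ) (j : Fin m) : (Fin n → ℝ) × (Fin n → ℝ) × (Fin m → ℝ) :=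
  (0, 0, Pi.single j 1)

/-- The coordinate direction in the `z = (p,s)`-variable. -/
noncomputable def eZ (n m : ℕ) : Fin (n + m) → (Fin n → ℝ) × (Fin n → ℝ) × (Fin m → ℝ) :=
  Fin.addCases (eP n m) (eS n m)

/-- The generator of the quasi-Markovian generalized Langevin equation:
`(Lφ)(q,p,s) = ⟨F(q), ∇_p φ⟩ + ⟨p, ∇_q φ⟩ − ⟨Γ(q)z, ∇_z φ⟩
  + (1/(2β)) ∑_{i,j} (Σ(q)Σ(q)ᵀ)_{ij} ∂²φ/∂z_i∂z_j`, where `z = (p,s)`. -/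
noncomputable def gleGen {n m : ℕ} (β : ℝ)
    (F : (Fin n → ℝ) → (Fin n → ℝ))
    (Γ Sig : (Fin n → ℝ) → Matrix (Fin (n + m)) (Fin (n + m)) ℝ)
    (φ : (Fin n → ℝ) × (Fin n → ℝ) × (Fin m → ℝ) → ℝ)
    (x : (Fin n → ℝ) × (Fin n → ℝ) × (Fin m → ℝ)) : ℝ :=
  let z : Fin (n + m) → ℝ := Fin.addCases x.2.1 x.2.2
  (∑ i, F x.1 i * fderiv ℝ φ x (eP n m i))
    + (∑ i, x.2.1 i * fderiv ℝ φ x (eQ n m i))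
    - (∑ i, (Γ x.1).mulVec z i * fderiv ℝ φ x (eZ n m i))
    + (1 / (2 * β)) * ∑ i, ∑ j,
        (Sig x.1 * (Sig x.1)ᵀ) i j * fderiv ℝ (fun y => fderiv ℝ φ y (eZ n m j)) x (eZ n m i)

/-! By the chain rule, `L e^{θK/2} = e^{θK/2} [(θ/2) LK + (θ²/(8β)) ∇_zKᵀ ΣΣᵀ ∇_zK]`.
The first term is at most `(θ/2)(-c‖x‖² + c')`; the second is at most
`(θ²/(8β)) ‖Σ‖_F² · 2c''²(1 + ‖x‖²)`, which for small `θ` is absorbed by half of the first.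
So the bracket is at most `-a‖x‖² + C` with `a > 0`, and `e^{θK/2}` times (bracket + 1) is
negative off a compact set, hence bounded above by continuity. -/

open Filter

section ExpChainRule

variable {E : Type*} [NormedAddCommGroup E] [NormedSpace ℝ E] {K : E → ℝ} {x : E}

theorem fderiv_exp_const_mul_apply (hK : DifferentiableAt ℝ K x) (θ : ℝ) (v : E) :
    fderiv ℝ (fun y => Real.exp (θ * K y)) x v = Real.exp (θ * K x) * (θ * fderiv ℝ K x v) := by
  rw [(hK.hasFDerivAt.const_mul θ).exp.fderiv]
  simp

theorem fderiv_fderiv_exp_const_mul_apply (hK : ContDiff ℝ 2 K) (θ : ℝ) (v w : E) :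
    fderiv ℝ (fun y => fderiv ℝ (fun z => Real.exp (θ * K z)) y w) x v
      = Real.exp (θ * K x) * (θ ^ 2 * (fderiv ℝ K x v * fderiv ℝ K x w)
          + θ * fderiv ℝ (fun y => fderiv ℝ K y w) x v) := by
  have hK₁ : Differentiable ℝ K := hK.differentiable (by norm_num)
  have hDK : Differentiable ℝ fun y => fderiv ℝ K y w :=
    ((hK.fderiv_right (by norm_num : (1 : WithTop ℕ∞) + 1 ≤ 2)).clm_apply
      contDiff_const).differentiable (by norm_num)
  have hexp : DifferentiableAt ℝ (fun y => Real.exp (θ * K y)) x :=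
    ((hK₁ x).const_mul θ).exp
  simp_rw [fderiv_exp_const_mul_apply (hK₁ _)]
  rw [fderiv_fun_mul hexp ((hDK x).const_mul θ)]
  simp only [FunLike.coe_add, Pi.add_apply, FunLike.coe_smul,
    Pi.smul_apply, smul_eq_mul, fderiv_const_mul (hDK x), fderiv_exp_const_mul_apply (hK₁ x)]
  ring

variable {ι : Type*} [Fintype ι]

theorem sum_mul_fderiv_exp_const_mul (hK : DifferentiableAt ℝ K x) (θ : ℝ) (a : ι → ℝ)
    (e : ι → E) :
    ∑ i, a i * fderiv ℝ (fun y => Real.exp (θ * K y)) x (e i)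
      = Real.exp (θ * K x) * (θ * ∑ i, a i * fderiv ℝ K x (e i)) := by
  simp only [fderiv_exp_const_mul_apply hK, Finset.mul_sum]
  exact Finset.sum_congr rfl fun i _ => by ring

theorem sum_sum_mul_fderiv_fderiv_exp_const_mul (hK : ContDiff ℝ 2 K) (θ : ℝ)
    (A : Matrix ι ι ℝ) (e : ι → E) :
    ∑ i, ∑ j, A i j * fderiv ℝ (fun y => fderiv ℝ (fun z => Real.exp (θ * K z)) y (e j)) x (e i)
      = Real.exp (θ * K x) * (θ ^ 2 * ∑ i, ∑ j, A i j * (fderiv ℝ K x (e i) * fderiv ℝ K x (e j))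
          + θ * ∑ i, ∑ j, A i j * fderiv ℝ (fun y => fderiv ℝ K y (e j)) x (e i)) := by
  simp only [fderiv_fderiv_exp_const_mul_apply hK, Finset.mul_sum, ← Finset.sum_add_distrib]
  exact Finset.sum_congr rfl fun i _ => Finset.sum_congr rfl fun j _ => by ring

end ExpChainRule

theorem sum_sum_mul_transpose_mul_le {ι : Type*} [Fintype ι] (A : Matrix ι ι ℝ) (g : ι → ℝ) :
    ∑ i, ∑ j, (A * Aᵀ) i j * (g i * g j) ≤ (∑ k, ∑ i, A i k ^ 2) * ∑ i, g i ^ 2 := by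
  calc ∑ i, ∑ j, (A * Aᵀ) i j * (g i * g j)
      = ∑ i, ∑ j, ∑ k, (A i k * g i) * (A j k * g j) := by
        refine Finset.sum_congr rfl fun i _ => Finset.sum_congr rfl fun j _ => ?_
        rw [Matrix.mul_apply, Finset.sum_mul]
        exact Finset.sum_congr rfl fun k _ => by rw [Matrix.transpose_apply]; ring
    _ = ∑ k, (∑ i, A i k * g i) ^ 2 := by
        rw [Finset.sum_comm_cycle]
        simp only [sq, Finset.sum_mul_sum]
    _ ≤ ∑ k, (∑ i, A i k ^ 2) * ∑ i, g i ^ 2 :=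
        Finset.sum_le_sum fun k _ => Finset.sum_mul_sq_le_sq_mul_sq _ _ _
    _ = (∑ k, ∑ i, A i k ^ 2) * ∑ i, g i ^ 2 := by rw [Finset.sum_mul]

theorem le_two_mul_sq_mul_one_add_of_sqrt_le {G r C : ℝ} (hr : 0 ≤ r)
    (h : √G ≤ C * (1 + √r)) : G ≤ 2 * C ^ 2 * (1 + r) := by
  have hsq : G ≤ (C * (1 + √r)) ^ 2 := (Real.sqrt_le_left ((Real.sqrt_nonneg G).trans h)).mp h
  nlinarith [Real.sq_sqrt hr, mul_nonneg (sq_nonneg C) (sq_nonneg (1 - √r))]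

theorem exists_mul_le_of_tendsto_cocompact_atBot {X : Type*} [TopologicalSpace X] {V g : X → ℝ}
    (hV : Continuous V) (hV₀ : ∀ x, 0 ≤ V x) (hg : Continuous g)
    (hg_atBot : Tendsto g (cocompact X) atBot) : ∃ b, ∀ x, V x * g x ≤ b := by
  rcases isEmpty_or_nonempty X with hX | ⟨⟨x₀⟩⟩
  · exact ⟨0, fun x => isEmptyElim x⟩
  have hcont : Continuous fun x => V x * max (g x) 0 := hV.mul (hg.max continuous_const)
  have hfar : ∀ᶠ x in cocompact X, V x * max (g x) 0 ≤ V x₀ * max (g x₀) 0 := by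
    filter_upwards [hg_atBot.eventually (eventually_le_atBot 0)] with x hx
    rw [max_eq_right hx, mul_zero]
    exact mul_nonneg (hV₀ x₀) (le_max_right _ _)
  obtain ⟨x₁, hx₁⟩ := hcont.exists_forall_ge' x₀ hfar
  exact ⟨_, fun x => (mul_le_mul_of_nonneg_left (le_max_left _ _) (hV₀ x)).trans (hx₁ x)⟩

theorem sq_norm_le_dotProduct_self {ι : Type*} [Fintype ι] (v : ι → ℝ) : ‖v‖ ^ 2 ≤ v ⬝ᵥ v := by
  have h₀ : 0 ≤ v ⬝ᵥ v := Finset.sum_nonneg fun i _ => mul_self_nonneg (v i)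
  refine (Real.le_sqrt (norm_nonneg v) h₀).mp <|
    (pi_norm_le_iff_of_nonneg (Real.sqrt_nonneg _)).mpr fun i => Real.abs_le_sqrt ?_
  simpa only [sq, dotProduct] using
    Finset.single_le_sum (f := fun j => v j * v j) (fun j _ => mul_self_nonneg (v j))
      (Finset.mem_univ i)

abbrev PhaseSpace (n m : ℕ) := (Fin n → ℝ) × (Fin n → ℝ) × (Fin m → ℝ)

section GLE

variable {n m : ℕ}

def sqNorm (x : PhaseSpace n m) : ℝ := x.1 ⬝ᵥ x.1 + x.2.1 ⬝ᵥ x.2.1 + x.2.2 ⬝ᵥ x.2.2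

noncomputable def gradZ (K : PhaseSpace n m → ℝ) (x : PhaseSpace n m) (i : Fin (n + m)) : ℝ :=
  fderiv ℝ K x (eZ n m i)

theorem sq_norm_le_sqNorm (x : PhaseSpace n m) : ‖x‖ ^ 2 ≤ sqNorm x := by
  have hdot {k : ℕ} (v : Fin k → ℝ) : 0 ≤ v ⬝ᵥ v := (sq_nonneg _).trans (sq_norm_le_dotProduct_self v)
  have h₁ := sq_norm_le_dotProduct_self x.1
  have h₂ := sq_norm_le_dotProduct_self x.2.1
  have h₃ := sq_norm_le_dotProduct_self x.2.2
  have hS : 0 ≤ sqNorm x := by unfold sqNorm; linarith [hdot x.1, hdot x.2.1, hdot x.2.2]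
  rw [← Real.le_sqrt (norm_nonneg x) hS, Prod.norm_def, Prod.norm_def]
  refine max_le ?_ (max_le ?_ ?_) <;> apply Real.le_sqrt_of_sq_le <;> unfold sqNorm <;>
    linarith [hdot x.1, hdot x.2.1, hdot x.2.2]

theorem sqNorm_nonneg (x : PhaseSpace n m) : 0 ≤ sqNorm x :=
  (sq_nonneg _).trans (sq_norm_le_sqNorm x)

@[fun_prop]
theorem continuous_sqNorm : Continuous (sqNorm : PhaseSpace n m → ℝ) := by
  unfold sqNorm dotProduct
  fun_prop

theorem tendsto_sqNorm_cocompact_atTop :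
    Tendsto (sqNorm : PhaseSpace n m → ℝ) (cocompact _) atTop :=
  tendsto_atTop_mono sq_norm_le_sqNorm
    ((tendsto_pow_atTop two_ne_zero).comp tendsto_norm_cocompact_atTop)

variable {β : ℝ} {F : (Fin n → ℝ) → (Fin n → ℝ)} {Γ Sig : Matrix (Fin (n + m)) (Fin (n + m)) ℝ}
  {K : PhaseSpace n m → ℝ}

theorem gleGen_exp_const_mul (hK : ContDiff ℝ 2 K) (θ : ℝ) (x : PhaseSpace n m) :
    gleGen β F (fun _ => Γ) (fun _ => Sig) (fun y => Real.exp (θ * K y)) x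
      = Real.exp (θ * K x) * (θ * gleGen β F (fun _ => Γ) (fun _ => Sig) K x
          + θ ^ 2 / (2 * β) * ∑ i, ∑ j, (Sig * Sigᵀ) i j * (gradZ K x i * gradZ K x j)) := by
  have hK₁ : DifferentiableAt ℝ K x := hK.differentiable (by norm_num) x
  simp only [gleGen, sum_mul_fderiv_exp_const_mul hK₁, sum_sum_mul_fderiv_fderiv_exp_const_mul hK,
    gradZ]
  ring

theorem gleGen_exp_half_mul_le (hβ : 0 < β) (hK : ContDiff ℝ 2 K) {c c' c'' : ℝ}
    (hLK : ∀ x, gleGen β F (fun _ => Γ) (fun _ => Sig) K x ≤ -c * sqNorm x + c')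
    (hgradK : ∀ x, √(∑ i, gradZ K x i ^ 2) ≤ c'' * (1 + √(sqNorm x)))
    {θ : ℝ} (hθ : 0 < θ) (hθc : θ * ((∑ k, ∑ i, Sig i k ^ 2) * c'' ^ 2) ≤ β * c)
    (x : PhaseSpace n m) :
    gleGen β F (fun _ => Γ) (fun _ => Sig) (fun y => Real.exp (θ / 2 * K y)) x
      ≤ Real.exp (θ / 2 * K x) * (-(θ * c / 4) * sqNorm x + (θ / 2 * c' + θ * c / 4)) := by
  set M := ∑ k, ∑ i, Sig i k ^ 2
  have hM : 0 ≤ M := by positivity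
  have hr := sqNorm_nonneg x
  have hQ : ∑ i, ∑ j, (Sig * Sigᵀ) i j * (gradZ K x i * gradZ K x j)
      ≤ M * (2 * c'' ^ 2 * (1 + sqNorm x)) :=
    (sum_sum_mul_transpose_mul_le Sig _).trans <| mul_le_mul_of_nonneg_left
      (le_two_mul_sq_mul_one_add_of_sqrt_le hr (hgradK x)) hM
  have hdiffusion : (θ / 2) ^ 2 / (2 * β)
      * ∑ i, ∑ j, (Sig * Sigᵀ) i j * (gradZ K x i * gradZ K x j) ≤ θ * c / 4 * (1 + sqNorm x) :=
    calc _ ≤ (θ / 2) ^ 2 / (2 * β) * (M * (2 * c'' ^ 2 * (1 + sqNorm x))) :=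
          mul_le_mul_of_nonneg_left hQ (by positivity)
      _ = θ * (M * c'' ^ 2) * (θ * (1 + sqNorm x) / (4 * β)) := by field_simp; ring
      _ ≤ β * c * (θ * (1 + sqNorm x) / (4 * β)) :=
          mul_le_mul_of_nonneg_right hθc (by positivity)
      _ = θ * c / 4 * (1 + sqNorm x) := by field_simp
  have hdrift := mul_le_mul_of_nonneg_left (hLK x) (by positivity : (0 : ℝ) ≤ θ / 2)
  rw [gleGen_exp_const_mul hK]
  refine mul_le_mul_of_nonneg_left ?_ (Real.exp_pos _).le
  linarith

end GLE

theorem stmt7_general {n m : ℕ} (β : ℝ) (hβ : 0 < β)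
    (Γ Sig : Matrix (Fin (n + m)) (Fin (n + m)) ℝ)
    (F : (Fin n → ℝ) → (Fin n → ℝ))
    (K : (Fin n → ℝ) × (Fin n → ℝ) × (Fin m → ℝ) → ℝ) (hK : ContDiff ℝ 2 K)
    (c : ℝ) (hc : 0 < c) (c' : ℝ) (c'' : ℝ)
    (hLK : ∀ x : (Fin n → ℝ) × (Fin n → ℝ) × (Fin m → ℝ),
      gleGen β F (fun _ => Γ) (fun _ => Sig) K x
        ≤ -c * (x.1 ⬝ᵥ x.1 + x.2.1 ⬝ᵥ x.2.1 + x.2.2 ⬝ᵥ x.2.2) + c')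
    (hgradK : ∀ x : (Fin n → ℝ) × (Fin n → ℝ) × (Fin m → ℝ),
      Real.sqrt (∑ i, (fderiv ℝ K x (eZ n m i)) ^ 2)
        ≤ c'' * (1 + Real.sqrt (x.1 ⬝ᵥ x.1 + x.2.1 ⬝ᵥ x.2.1 + x.2.2 ⬝ᵥ x.2.2))) :
    ∃ θ₀ : ℝ, 0 < θ₀ ∧ ∀ θ : ℝ, 0 < θ → θ ≤ θ₀ → ∃ b : ℝ,
      ∀ x : (Fin n → ℝ) × (Fin n → ℝ) × (Fin m → ℝ),
        gleGen β F (fun _ => Γ) (fun _ => Sig) (fun y => Real.exp ((θ / 2) * K y)) x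
          ≤ -Real.exp ((θ / 2) * K x) + b := by
  set M := ∑ k, ∑ i, Sig i k ^ 2
  refine ⟨β * c / (M * c'' ^ 2 + 1), by positivity, fun θ hθ hθ₀ => ?_⟩
  have hθc : θ * (M * c'' ^ 2) ≤ β * c :=
    calc θ * (M * c'' ^ 2) ≤ θ * (M * c'' ^ 2 + 1) := by linarith
      _ ≤ β * c := (le_div_iff₀ (by positivity)).mp hθ₀
  have hlyap := gleGen_exp_half_mul_le hβ hK hLK hgradK hθ hθc
  have hcoercive : Tendsto (fun x => -(θ * c / 4) * sqNorm x + (θ / 2 * c' + θ * c / 4) + 1)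
      (cocompact (PhaseSpace n m)) atBot :=
    tendsto_atBot_add_const_right _ _ <| tendsto_atBot_add_const_right _ _ <|
      tendsto_sqNorm_cocompact_atTop.const_mul_atTop_of_neg (by nlinarith)
  obtain ⟨b, hb⟩ := exists_mul_le_of_tendsto_cocompact_atBot
    (by fun_prop : Continuous fun x => Real.exp (θ / 2 * K x)) (fun x => (Real.exp_pos _).le)
    (by fun_prop) hcoercive
  refine ⟨b, fun x => ?_⟩
  linarith [hlyap x, hb x, mul_add_one (Real.exp (θ / 2 * K x))
    (-(θ * c / 4) * sqNorm x + (θ / 2 * c' + θ * c / 4))]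

/-- If a `C²` Lyapunov function `K ≥ 1` for the constant-coefficient GLE generator satisfies
`L K ≤ −c‖x‖² + c′` and `‖∇_z K‖ ≤ c″(1 + ‖x‖)`, then for every sufficiently small `θ > 0`
there is `b` such that `K̂_θ = exp((θ/2)K)` satisfies `L K̂_θ ≤ −K̂_θ + b`. -/
theorem stmt7 {n m : ℕ} (hn : 0 < n) (hm : 0 < m) (β : ℝ) (hβ : 0 < β)
    (Γ Sig : Matrix (Fin (n + m)) (Fin (n + m)) ℝ)
    (F : (Fin n → ℝ) → (Fin n → ℝ)) (hFcont : Continuous F)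
    (K : (Fin n → ℝ) × (Fin n → ℝ) × (Fin m → ℝ) → ℝ) (hK : ContDiff ℝ 2 K)
    (hK1 : ∀ x, 1 ≤ K x)
    (c : ℝ) (hc : 0 < c) (c' : ℝ) (c'' : ℝ) (hc'' : 0 ≤ c'')
    (hLK : ∀ x : (Fin n → ℝ) × (Fin n → ℝ) × (Fin m → ℝ),
      gleGen β F (fun _ => Γ) (fun _ => Sig) K x
        ≤ -c * (x.1 ⬝ᵥ x.1 + x.2.1 ⬝ᵥ x.2.1 + x.2.2 ⬝ᵥ x.2.2) + c')
    (hgradK : ∀ x : (Fin n → ℝ) × (Fin n → ℝ) × (Fin m → ℝ),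
      Real.sqrt (∑ i, (fderiv ℝ K x (eZ n m i)) ^ 2)
        ≤ c'' * (1 + Real.sqrt (x.1 ⬝ᵥ x.1 + x.2.1 ⬝ᵥ x.2.1 + x.2.2 ⬝ᵥ x.2.2))) :
    ∃ θ₀ : ℝ, 0 < θ₀ ∧ ∀ θ : ℝ, 0 < θ → θ ≤ θ₀ → ∃ b : ℝ,
      ∀ x : (Fin n → ℝ) × (Fin n → ℝ) × (Fin m → ℝ),
        gleGen β F (fun _ => Γ) (fun _ => Sig) (fun y => Real.exp ((θ / 2) * K y)) x
          ≤ -Real.exp ((θ / 2) * K x) + b :=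
  stmt7_general β hβ Γ Sig F K hK c hc c' c'' hLK hgradK
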